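/- arXiv:0906.3234 — 3 statements merged into one kernel-verified Lean document; each statement's English description precedes it below -/
import Mathlib

section
/- For λ > 0 and the hard-thresholding objective F(x,z,λ) = |z-x|²/(2λ) + 1_{x≠0} with minimizer x̂ = T^hard_{√(2λ)}(z), the limit lim_{x→x̂} |x - x̂|² / (2(F(x,z,λ) - F(x̂,z,λ))) equals λ if |z| > √(2λ) and 0 if |z| < √(2λ). -/
/-!
Away from `x̂` the indicator `1_{x ≠ 0}` is locally constant. If `x̂ = z ≠ 0` it cancels in
`F(x) - F(x̂) = |x - z|² / (2λ)`, so the ratio is identically `λ` near `z`. If `x̂ = 0` it jumps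
by `1`, so the denominator tends to `2` while the numerator tends to `0`.
-/

open Real Filter

/-- The hard-thresholding operator. -/
noncomputable def hardThresh (t z : ℝ) : ℝ := if t < |z| then z else 0

open Topology

noncomputable def hardObjective (lam z x : ℝ) : ℝ :=
  |z - x| ^ 2 / (2 * lam) + if x ≠ 0 then 1 else 0

noncomputable def curvatureRatio (lam z xhat x : ℝ) : ℝ :=
  |x - xhat| ^ 2 / (2 * (hardObjective lam z x - hardObjective lam z xhat))

theorem hardObjective_of_ne_zero {lam z x : ℝ} (hx : x ≠ 0) :
    hardObjective lam z x = |z - x| ^ 2 / (2 * lam) + 1 := by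
  rw [hardObjective, if_pos hx]

theorem hardObjective_zero (lam z : ℝ) : hardObjective lam z 0 = |z| ^ 2 / (2 * lam) := by
  simp [hardObjective]

theorem curvatureRatio_eq_of_ne {lam z x : ℝ} (hz : z ≠ 0) (hx : x ≠ 0) (hxz : x ≠ z) :
    curvatureRatio lam z z x = lam := by
  have hd : |z - x| ^ 2 ≠ 0 := by simpa [sub_eq_zero] using hxz.symm
  rw [curvatureRatio, hardObjective_of_ne_zero hx, hardObjective_of_ne_zero hz, abs_sub_comm]
  calc |z - x| ^ 2 / (2 * (|z - x| ^ 2 / (2 * lam) + 1 - (|z - z| ^ 2 / (2 * lam) + 1)))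
      = |z - x| ^ 2 / (|z - x| ^ 2 / lam) := by rw [sub_self, abs_zero]; ring
    _ = lam := div_div_cancel₀ hd -- also for `λ = 0`, as `a / 0 = 0`

theorem tendsto_curvatureRatio_self {lam z : ℝ} (hz : z ≠ 0) :
    Tendsto (curvatureRatio lam z z) (𝓝[≠] z) (𝓝 lam) := by
  refine tendsto_const_nhds.congr' ?_
  filter_upwards [self_mem_nhdsWithin, nhdsWithin_le_nhds (eventually_ne_nhds hz)]
    with x hxz hx0
  exact (curvatureRatio_eq_of_ne hz hx0 hxz).symm

theorem tendsto_curvatureRatio_zero (lam z : ℝ) :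
    Tendsto (curvatureRatio lam z 0) (𝓝[≠] 0) (𝓝 0) := by
  set g : ℝ → ℝ := fun x => |x| ^ 2 / (2 * (|z - x| ^ 2 / (2 * lam) + 1 - |z| ^ 2 / (2 * lam)))
  have hg : Tendsto g (𝓝 0) (𝓝 (g 0)) :=
    (ContinuousAt.div (by fun_prop) (by fun_prop) (by simp)).tendsto
  have hg0 : g 0 = 0 := by simp [g]
  rw [hg0] at hg
  refine (hg.mono_left nhdsWithin_le_nhds).congr' ?_
  filter_upwards [self_mem_nhdsWithin] with x hx
  simp only [curvatureRatio, g, hardObjective_of_ne_zero hx, hardObjective_zero, sub_zero]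

theorem hardThresh_curvature_limit_general (lam z : ℝ) :
    Tendsto (fun x : ℝ =>
        |x - hardThresh (Real.sqrt (2 * lam)) z| ^ 2 /
          (2 * ((|z - x| ^ 2 / (2 * lam) + (if x ≠ 0 then (1 : ℝ) else 0)) -
            (|z - hardThresh (Real.sqrt (2 * lam)) z| ^ 2 / (2 * lam) +
              (if hardThresh (Real.sqrt (2 * lam)) z ≠ 0 then (1 : ℝ) else 0)))))
      (nhdsWithin (hardThresh (Real.sqrt (2 * lam)) z)
        {hardThresh (Real.sqrt (2 * lam)) z}ᶜ)
      (nhds (if Real.sqrt (2 * lam) < |z| then lam else 0)) := by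
  change Tendsto (curvatureRatio lam z (hardThresh √(2 * lam) z)) _ _
  by_cases h : √(2 * lam) < |z|
  · have hz : z ≠ 0 := abs_pos.mp ((Real.sqrt_nonneg _).trans_lt h)
    simpa only [hardThresh, if_pos h] using tendsto_curvatureRatio_self hz
  · simpa only [hardThresh, if_neg h] using tendsto_curvatureRatio_zero lam z

/-- Curvature limit `σ²(z,λ)` for the hard-thresholding objective
`F(x) = (z-x)²/(2λ) + 1_{x ≠ 0}` with minimizer `x̂ = T^hard_{√(2λ)}(z)`:
the limit equals `λ` if `|z| > √(2λ)` and `0` if `|z| < √(2λ)`. -/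
theorem hardThresh_curvature_limit (lam z : ℝ) (hlam : 0 < lam)
    (hz : |z| ≠ Real.sqrt (2 * lam)) :
    Tendsto (fun x : ℝ =>
        |x - hardThresh (Real.sqrt (2 * lam)) z| ^ 2 /
          (2 * ((|z - x| ^ 2 / (2 * lam) + (if x ≠ 0 then (1 : ℝ) else 0)) -
            (|z - hardThresh (Real.sqrt (2 * lam)) z| ^ 2 / (2 * lam) +
              (if hardThresh (Real.sqrt (2 * lam)) z ≠ 0 then (1 : ℝ) else 0)))))
      (nhdsWithin (hardThresh (Real.sqrt (2 * lam)) z)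
        {hardThresh (Real.sqrt (2 * lam)) z}ᶜ)
      (nhds (if Real.sqrt (2 * lam) < |z| then lam else 0)) :=
  hardThresh_curvature_limit_general lam z
end

section
/- Fix λ > 0 and z ∈ ℝ with |z| > λ. Let F(x) = (z-x)²/(2λ) + |x|, x̂ = T^soft_λ(z), and q_u(x) = e^{-uF(x)}/∫_ℝ e^{-uF}. Then lim_{u→∞} ∫_ℝ u·(x - x̂)² q_u(x) dx = λ. -/
/-!
For `z > λ`, completing the square gives `F(x) = (x - x̂)²/(2λ) + (|x| - x) + (z - λ/2)`
with `x̂ = z - λ > 0`, and the penalty `|x| - x` is nonnegative and vanishes near `x̂`.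
Substituting `x = x̂ + y/√u` turns `u (x - x̂)² q_u(x) dx` into `y²` against the density
`e^{-y²/(2λ)} e^{-u(|x| - x)}`, normalised. The second factor is bounded by `1` and is
eventually `1` at each `y`, so by dominated convergence the limit is the second moment of the
centred Gaussian of variance `λ`. The case `z < -λ` follows from the symmetry `x ↦ -x`.
-/

open MeasureTheory Filter Real

/-- The soft-thresholding operator. -/
noncomputable def softThresh (lam z : ℝ) : ℝ :=
  if z > lam then z - lam else if z < -lam then z + lam else 0

open Topology ProbabilityTheory

theorem integrable_sq_mul_exp_neg_mul_sq {b : ℝ} (hb : 0 < b) :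
    Integrable fun x : ℝ => x ^ 2 * exp (-b * x ^ 2) := by
  simpa using integrable_rpow_mul_exp_neg_mul_sq hb (by norm_num : (-1 : ℝ) < 2)

theorem integral_sq_mul_exp_neg_mul_sq {b : ℝ} (hb : 0 < b) :
    ∫ x : ℝ, x ^ 2 * exp (-b * x ^ 2) = (2 * b)⁻¹ * ∫ x : ℝ, exp (-b * x ^ 2) := by
  set v : NNReal := ⟨(2 * b)⁻¹, by positivity⟩
  have hvb : (v : ℝ) = (2 * b)⁻¹ := rfl
  have hv : v ≠ 0 := by rw [← NNReal.coe_ne_zero, hvb]; positivity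
  set c := (√(2 * π * v))⁻¹
  have hc : c ≠ 0 := by simp only [c, hvb]; positivity
  have hpdf : ∀ x, gaussianPDFReal 0 v x = c * exp (-b * x ^ 2) := by
    intro x
    rw [gaussianPDFReal, hvb, sub_zero]
    congr 2
    field_simp
  have hmass : c * ∫ x : ℝ, exp (-b * x ^ 2) = 1 := by
    rw [← integral_const_mul, ← integral_gaussianPDFReal_eq_one 0 hv]
    simp only [hpdf]
  have hmoment : c * ∫ x : ℝ, x ^ 2 * exp (-b * x ^ 2) = v := by
    calc c * ∫ x : ℝ, x ^ 2 * exp (-b * x ^ 2)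
        = ∫ x, x ^ 2 ∂gaussianReal 0 v := by
          rw [← integral_const_mul, integral_gaussianReal_eq_integral_smul hv]
          simp only [hpdf, smul_eq_mul]
          congr 1
          ext x
          ring
      _ = Var[id; gaussianReal 0 v] :=
          (variance_of_integral_eq_zero aemeasurable_id integral_id_gaussianReal).symm
      _ = v := variance_id_gaussianReal
  apply mul_left_cancel₀ hc
  rw [hmoment, mul_left_comm, hmass, mul_one]
  rfl

noncomputable def rescaledGibbsVariance (F : ℝ → ℝ) (m u : ℝ) : ℝ :=
  (∫ x, u * (x - m) ^ 2 * exp (-(u * F x))) / ∫ x, exp (-(u * F x))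

theorem rescaledGibbsVariance_add_const (F : ℝ → ℝ) (c m : ℝ) :
    rescaledGibbsVariance (fun x => F x + c) m = rescaledGibbsVariance F m := by
  ext u
  have hsplit : ∀ x, exp (-(u * (F x + c))) = exp (-(u * c)) * exp (-(u * F x)) := by
    intro x
    rw [← exp_add]
    ring_nf
  simp only [rescaledGibbsVariance, hsplit, mul_left_comm _ (exp (-(u * c))),
    integral_const_mul]
  exact mul_div_mul_left _ _ (exp_ne_zero _)

theorem rescaledGibbsVariance_comp_neg (F : ℝ → ℝ) (m : ℝ) :
    rescaledGibbsVariance (fun x => F (-x)) (-m) = rescaledGibbsVariance F m := by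
  ext u
  simp only [rescaledGibbsVariance]
  rw [← integral_neg_eq_self (fun x => u * (x - m) ^ 2 * exp (-(u * F x))),
    ← integral_neg_eq_self (fun x => exp (-(u * F x)))]
  congr 2
  ext x
  ring

theorem rescaledGibbsVariance_eq_div_integral (F : ℝ → ℝ) (m : ℝ) {u : ℝ} (hu : 0 < u) :
    rescaledGibbsVariance F m u =
      (∫ y, y ^ 2 * exp (-(u * F (m + y / √u)))) / ∫ y, exp (-(u * F (m + y / √u))) := by
  have hsubst : ∀ h : ℝ → ℝ, ∫ y, h (m + y / √u) = √u * ∫ x, h x := by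
    intro h
    rw [Measure.integral_comp_div (fun t => h (m + t)), integral_add_left_eq_self,
      abs_of_pos (sqrt_pos.2 hu), smul_eq_mul]
  have hscale : ∀ y, u * (m + y / √u - m) ^ 2 = y ^ 2 := by
    intro y
    rw [add_sub_cancel_left, div_pow, sq_sqrt hu.le]
    field_simp
  rw [rescaledGibbsVariance, ← mul_div_mul_left _ _ (sqrt_ne_zero'.2 hu), ← hsubst, ← hsubst]
  simp only [hscale]

theorem tendsto_integral_mul_exp_neg_mul_penalty {μ : Measure ℝ} {G P : ℝ → ℝ} {a : ℝ}
    (hG : Integrable G μ) (hP : Measurable P) (hP_nonneg : ∀ x, 0 ≤ P x) (hP_flat : P =ᶠ[𝓝 a] 0) :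
    Tendsto (fun u => ∫ y, G y * exp (-(u * P (a + y / √u))) ∂μ) atTop (𝓝 (∫ y, G y ∂μ)) := by
  refine tendsto_integral_filter_of_dominated_convergence (fun y => ‖G y‖) ?_ ?_ hG.norm ?_
  · refine Eventually.of_forall fun u => hG.aestronglyMeasurable.mul ?_
    exact (hP.comp (by fun_prop)).const_mul u |>.neg.exp.aestronglyMeasurable
  · filter_upwards [eventually_ge_atTop 0] with u hu
    refine Eventually.of_forall fun y => ?_
    rw [norm_mul, norm_of_nonneg (exp_pos _).le]
    refine mul_le_of_le_one_right (norm_nonneg _) (exp_le_one_iff.2 ?_)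
    exact neg_nonpos.2 (mul_nonneg hu (hP_nonneg _))
  · refine Eventually.of_forall fun y => ?_
    have hshift : Tendsto (fun u => a + y / √u) atTop (𝓝 a) := by
      simpa using tendsto_const_nhds.add (tendsto_const_nhds.div_atTop tendsto_sqrt_atTop)
    refine tendsto_const_nhds.congr' ((hshift.eventually hP_flat).mono fun u hu => ?_)
    simp [hu]

theorem tendsto_rescaledGibbsVariance_quadratic_add_penalty {v a : ℝ} {P : ℝ → ℝ} (hv : 0 < v)
    (hP : Measurable P) (hP_nonneg : ∀ x, 0 ≤ P x) (hP_flat : P =ᶠ[𝓝 a] 0) :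
    Tendsto (rescaledGibbsVariance (fun x => (x - a) ^ 2 / (2 * v) + P x) a) atTop (𝓝 v) := by
  set b := (2 * v)⁻¹
  have hb : 0 < b := by positivity
  have hrescale : ∀ᶠ u in atTop,
      (∫ y, (y ^ 2 * exp (-b * y ^ 2)) * exp (-(u * P (a + y / √u)))) /
          ∫ y, exp (-b * y ^ 2) * exp (-(u * P (a + y / √u))) =
        rescaledGibbsVariance (fun x => (x - a) ^ 2 / (2 * v) + P x) a u := by
    filter_upwards [eventually_gt_atTop 0] with u hu
    have hsplit : ∀ y, exp (-(u * ((a + y / √u - a) ^ 2 / (2 * v) + P (a + y / √u)))) =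
        exp (-b * y ^ 2) * exp (-(u * P (a + y / √u))) := by
      intro y
      rw [← exp_add, add_sub_cancel_left, div_pow, sq_sqrt hu.le]
      congr 1
      simp only [b]
      field_simp
      ring
    simp only [rescaledGibbsVariance_eq_div_integral _ _ hu, hsplit, mul_assoc]
  have hmass : 0 < ∫ y, exp (-b * y ^ 2) := by
    rw [integral_gaussian]
    positivity
  have hlim := (tendsto_integral_mul_exp_neg_mul_penalty (integrable_sq_mul_exp_neg_mul_sq hb)
    hP hP_nonneg hP_flat).div (tendsto_integral_mul_exp_neg_mul_penalty (integrable_exp_neg_mul_sq hb)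
    hP hP_nonneg hP_flat) hmass.ne'
  rw [integral_sq_mul_exp_neg_mul_sq hb, mul_div_cancel_right₀ _ hmass.ne'] at hlim
  convert hlim.congr' hrescale using 2
  simp only [b]
  field_simp

theorem softThresh_of_lt {lam z : ℝ} (hz : lam < z) : softThresh lam z = z - lam :=
  if_pos hz

theorem softThresh_neg {lam : ℝ} (hlam : 0 ≤ lam) (z : ℝ) :
    softThresh lam (-z) = -softThresh lam z := by
  unfold softThresh
  split_ifs <;> linarith

theorem tendsto_rescaledGibbsVariance_lasso_of_lt {lam z : ℝ} (hlam : 0 < lam) (hz : lam < z) :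
    Tendsto (rescaledGibbsVariance (fun x => (z - x) ^ 2 / (2 * lam) + |x|) (softThresh lam z))
      atTop (𝓝 lam) := by
  have henergy : (fun x => (z - x) ^ 2 / (2 * lam) + |x|) =
      fun x => ((x - (z - lam)) ^ 2 / (2 * lam) + (|x| - x)) + (z - lam / 2) := by
    ext x
    field_simp
    ring
  have hflat : (fun x : ℝ => |x| - x) =ᶠ[𝓝 (z - lam)] 0 :=
    (lt_mem_nhds (sub_pos.2 hz)).mono fun x hx => by simp [abs_of_pos hx]
  rw [henergy, rescaledGibbsVariance_add_const, softThresh_of_lt hz]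
  exact tendsto_rescaledGibbsVariance_quadratic_add_penalty hlam (by fun_prop)
    (fun x => sub_nonneg.2 (le_abs_self x)) hflat

/-- Rescaled posterior variance of the lasso Gibbs measure in the regime
`|z| > λ`: `lim_{u→∞} ∫ u (x - x̂)² q_u(x) dx = λ` where
`q_u ∝ e^{-u F}`, `F(x) = (z-x)²/(2λ) + |x|`, `x̂ = T^soft_λ(z)`. -/
theorem lasso_gibbs_variance_above_threshold (lam z : ℝ) (hlam : 0 < lam)
    (hz : lam < |z|) :
    Tendsto (fun u : ℝ =>
        (∫ x : ℝ, u * (x - softThresh lam z) ^ 2 *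
            Real.exp (-(u * ((z - x) ^ 2 / (2 * lam) + |x|)))) /
          (∫ x : ℝ, Real.exp (-(u * ((z - x) ^ 2 / (2 * lam) + |x|)))))
      atTop (nhds lam) := by
  change Tendsto (rescaledGibbsVariance (fun x => (z - x) ^ 2 / (2 * lam) + |x|)
    (softThresh lam z)) atTop (𝓝 lam)
  rcases lt_abs.1 hz with hpos | hneg
  · exact tendsto_rescaledGibbsVariance_lasso_of_lt hlam hpos
  · rw [← rescaledGibbsVariance_comp_neg, ← softThresh_neg hlam.le]
    convert tendsto_rescaledGibbsVariance_lasso_of_lt hlam hneg using 3 with x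
    rw [abs_neg]
    ring
end

section
/- Fix λ > 0 and z ∈ ℝ with |z| < λ. Let F(x) = (z-x)²/(2λ) + |x| and q_u(x) = e^{-uF(x)}/∫_ℝ e^{-uF}. Then lim_{u→∞} ∫_ℝ u·x² q_u(x) dx = 0. -/
/-!
The lower bound `F x ≥ F 0 + c |x|`, with `c = 1 - |z|/λ > 0` the slack of the subgradient
condition at the kink, bounds the numerator by
`u e^{-u F 0} ∫ x² e^{-u c |x|} = O(u⁻² e^{-u F 0})`.
The linear upper bound `F x ≤ F 0 + B x` on `(0, 1]` gives `e^{-u F} ≥ e^{-u F 0 - B}` on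
`(0, 1/u]`, so the denominator is at least `e^{-u F 0 - B} / u`. The ratio is therefore `O(1/u)`.
-/

open MeasureTheory Filter Real Set

open scoped Nat Topology

theorem integral_abs_pow_mul_exp_neg_mul_abs (n : ℕ) {b : ℝ} (hb : 0 < b) :
    ∫ x : ℝ, |x| ^ n * exp (-(b * |x|)) = 2 * n ! / b ^ (n + 1) := by
  have hGamma := integral_rpow_mul_exp_neg_mul_Ioi (a := n + 1) (by positivity) hb
  simp only [add_sub_cancel_right, rpow_natCast, Gamma_nat_eq_factorial] at hGamma
  rw [integral_comp_abs (f := fun t => t ^ n * exp (-(b * t))), hGamma, ← rpow_natCast]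
  push_cast
  rw [div_rpow zero_le_one hb.le, one_rpow]
  ring

theorem integrable_abs_pow_mul_exp_neg_mul_abs (n : ℕ) {b : ℝ} (hb : 0 < b) :
    Integrable fun x : ℝ => |x| ^ n * exp (-(b * |x|)) :=
  Integrable.of_integral_ne_zero <| by
    rw [integral_abs_pow_mul_exp_neg_mul_abs n hb]; positivity

section Kink

variable {F : ℝ → ℝ} {m c B δ u : ℝ}

theorem exp_neg_mul_le_of_add_mul_abs_le (hlow : ∀ x, m + c * |x| ≤ F x) (hu : 0 ≤ u)
    (x : ℝ) :
    exp (-(u * F x)) ≤ exp (-(u * m)) * exp (-(u * c * |x|)) := by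
  rw [← exp_add, exp_le_exp]
  nlinarith [hlow x]

theorem integrable_exp_neg_mul_of_add_mul_abs_le (hF : Measurable F) (hc : 0 < c)
    (hlow : ∀ x, m + c * |x| ≤ F x) (hu : 0 < u) :
    Integrable fun x => exp (-(u * F x)) := by
  have hdom :=
    (integrable_abs_pow_mul_exp_neg_mul_abs 0 (mul_pos hu hc)).const_mul (exp (-(u * m)))
  refine hdom.mono' (hF.const_mul u).neg.exp.aestronglyMeasurable (.of_forall fun x => ?_)
  rw [norm_of_nonneg (exp_pos _).le, pow_zero, one_mul]
  exact exp_neg_mul_le_of_add_mul_abs_le hlow hu.le x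

theorem integral_sq_mul_exp_neg_mul_le (hc : 0 < c) (hlow : ∀ x, m + c * |x| ≤ F x)
    (hu : 0 < u) :
    ∫ x, x ^ 2 * exp (-(u * F x)) ≤ exp (-(u * m)) * (4 / (u * c) ^ 3) := by
  have huc := mul_pos hu hc
  calc ∫ x, x ^ 2 * exp (-(u * F x))
      ≤ ∫ x, exp (-(u * m)) * (|x| ^ 2 * exp (-(u * c * |x|))) := by
        refine integral_mono_of_nonneg (.of_forall fun x => by positivity)
          ((integrable_abs_pow_mul_exp_neg_mul_abs 2 huc).const_mul _) (.of_forall fun x => ?_)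
        dsimp only
        rw [sq_abs, mul_left_comm]
        exact mul_le_mul_of_nonneg_left (exp_neg_mul_le_of_add_mul_abs_le hlow hu.le x)
          (sq_nonneg x)
    _ = exp (-(u * m)) * (4 / (u * c) ^ 3) := by
        rw [integral_const_mul, integral_abs_pow_mul_exp_neg_mul_abs 2 huc]
        norm_num

theorem exp_neg_mul_div_le_integral (hF : Measurable F) (hc : 0 < c)
    (hlow : ∀ x, m + c * |x| ≤ F x) (hB : 0 ≤ B) (hup : ∀ x ∈ Ioc 0 δ, F x ≤ m + B * x)
    (hu : 0 < u) (huδ : u⁻¹ ≤ δ) :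
    exp (-(u * m)) * exp (-B) / u ≤ ∫ x, exp (-(u * F x)) := by
  have hint := integrable_exp_neg_mul_of_add_mul_abs_le hF hc hlow hu
  have hbound : ∀ x ∈ Ioc 0 u⁻¹, exp (-(u * m)) * exp (-B) ≤ exp (-(u * F x)) := by
    rintro x ⟨hx0, hxu⟩
    have hux : u * x ≤ 1 :=
      (mul_le_mul_of_nonneg_left hxu hu.le).trans_eq (mul_inv_cancel₀ hu.ne')
    rw [← exp_add, exp_le_exp]
    nlinarith [hup x ⟨hx0, hxu.trans huδ⟩]
  calc exp (-(u * m)) * exp (-B) / u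
      = exp (-(u * m)) * exp (-B) * volume.real (Ioc 0 u⁻¹) := by
        rw [Real.volume_real_Ioc_of_le (inv_pos.mpr hu).le, sub_zero, div_eq_mul_inv]
    _ ≤ ∫ x in Ioc 0 u⁻¹, exp (-(u * F x)) :=
        setIntegral_ge_of_const_le_real measurableSet_Ioc measure_Ioc_lt_top.ne hbound
          hint.integrableOn
    _ ≤ ∫ x, exp (-(u * F x)) :=
        setIntegral_le_integral hint (.of_forall fun x => (exp_pos _).le)

theorem tendsto_gibbs_variance_of_kink (hF : Measurable F) (hc : 0 < c)
    (hlow : ∀ x, m + c * |x| ≤ F x) (hB : 0 ≤ B) (hδ : 0 < δ)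
    (hup : ∀ x ∈ Ioc 0 δ, F x ≤ m + B * x) :
    Tendsto (fun u : ℝ => (∫ x, u * x ^ 2 * exp (-(u * F x))) / ∫ x, exp (-(u * F x)))
      atTop (𝓝 0) := by
  have hbound : ∀ᶠ u in atTop,
      (∫ x, u * x ^ 2 * exp (-(u * F x))) / (∫ x, exp (-(u * F x)))
        ≤ 4 * exp B / c ^ 3 / u := by
    filter_upwards [eventually_ge_atTop δ⁻¹, eventually_gt_atTop 0] with u huδ hu
    have hD := exp_neg_mul_div_le_integral hF hc hlow hB hup hu (inv_le_of_inv_le₀ hδ huδ)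
    calc (∫ x, u * x ^ 2 * exp (-(u * F x))) / (∫ x, exp (-(u * F x)))
        ≤ u * (exp (-(u * m)) * (4 / (u * c) ^ 3)) / (exp (-(u * m)) * exp (-B) / u) := by
          simp_rw [mul_assoc, integral_const_mul]
          exact div_le_div₀ (by positivity)
            (mul_le_mul_of_nonneg_left (integral_sq_mul_exp_neg_mul_le hc hlow hu) hu.le)
            (by positivity) hD
      _ = 4 * exp B / c ^ 3 / u := by
          rw [exp_neg B]
          field_simp
  have hnonneg : ∀ᶠ u in atTop,
      0 ≤ (∫ x, u * x ^ 2 * exp (-(u * F x))) / (∫ x, exp (-(u * F x))) := by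
    filter_upwards [eventually_ge_atTop 0] with u hu
    exact div_nonneg (integral_nonneg fun x => by positivity)
      (integral_nonneg fun x => (exp_pos _).le)
  exact tendsto_of_tendsto_of_tendsto_of_le_of_le' tendsto_const_nhds
    (tendsto_const_nhds.div_atTop tendsto_id) hnonneg hbound

end Kink

noncomputable def lassoObjective (lam z x : ℝ) : ℝ := (z - x) ^ 2 / (2 * lam) + |x|

theorem lassoObjective_ge (lam z x : ℝ) (hlam : 0 < lam) :
    z ^ 2 / (2 * lam) + (1 - |z| / lam) * |x| ≤ lassoObjective lam z x := by
  have hzx : z * x ≤ |z| * |x| := (le_abs_self _).trans_eq (abs_mul z x)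
  rw [lassoObjective, ← sub_nonneg]
  have key : (z - x) ^ 2 / (2 * lam) + |x| - (z ^ 2 / (2 * lam) + (1 - |z| / lam) * |x|)
      = (x ^ 2 + 2 * (|z| * |x| - z * x)) / (2 * lam) := by
    field_simp; ring
  rw [key]
  exact div_nonneg (by linarith [sq_nonneg x]) (by positivity)

theorem lassoObjective_le (lam z : ℝ) (hlam : 0 < lam) {x : ℝ} (hx : x ∈ Ioc (0 : ℝ) 1) :
    lassoObjective lam z x ≤ z ^ 2 / (2 * lam) + ((2 * |z| + 1) / (2 * lam) + 1) * x := by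
  obtain ⟨hx0, hx1⟩ := hx
  have hzx : -(z * x) ≤ |z| * x := by
    simpa [abs_mul, abs_of_pos hx0] using neg_le_abs (z * x)
  have hxx : x ^ 2 ≤ x := by nlinarith
  rw [lassoObjective, abs_of_pos hx0, ← sub_nonneg]
  have key : z ^ 2 / (2 * lam) + ((2 * |z| + 1) / (2 * lam) + 1) * x - ((z - x) ^ 2 / (2 * lam) + x)
      = (2 * (|z| * x + z * x) + (x - x ^ 2)) / (2 * lam) := by
    field_simp; ring
  rw [key]
  exact div_nonneg (by linarith) (by positivity)

/-- Rescaled posterior variance of the lasso Gibbs measure in the regime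
`|z| < λ`: `lim_{u→∞} ∫ u x² q_u(x) dx = 0` where `q_u ∝ e^{-u F}` and
`F(x) = (z-x)²/(2λ) + |x|`. -/
theorem lasso_gibbs_variance_below_threshold (lam z : ℝ) (hlam : 0 < lam)
    (hz : |z| < lam) :
    Tendsto (fun u : ℝ =>
        (∫ x : ℝ, u * x ^ 2 * Real.exp (-(u * ((z - x) ^ 2 / (2 * lam) + |x|)))) /
          (∫ x : ℝ, Real.exp (-(u * ((z - x) ^ 2 / (2 * lam) + |x|)))))
      atTop (nhds 0) := by
  have hc : 0 < 1 - |z| / lam := sub_pos.mpr ((div_lt_one hlam).mpr hz)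
  exact tendsto_gibbs_variance_of_kink (F := lassoObjective lam z)
    (by unfold lassoObjective; fun_prop) hc (lassoObjective_ge lam z · hlam) (by positivity)
    one_pos (fun x hx => lassoObjective_le lam z hlam hx)
end
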